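/- Let 0 < q < 1, x \ge 0, and let m be an odd positive integer. With G_{n,q}(x) = n[2]_q (1-q)^{-(n-1)} \sum_{l=0}^{n-1} \binom{n-1}{l} \frac{(-1)^l q^{lx}}{1+q^l} for n \ge 1, one has the distribution relation G_{n,q}(x) = \frac{[2]_q}{[2]_{q^m}} [m]_q^{n-1} \sum_{a=0}^{m-1} (-1)^a G_{n,q^m}\!\left(\frac{x+a}{m}\right). -/
import Mathlib


open Finset

/-- The `q`-Genocchi polynomial `G_{n,q}(x)`, closed form:
`n [2]_q (1-q)^{-(n-1)} ∑_{l=0}^{n-1} C(n-1,l) (-1)^l q^{lx}/(1+q^l)`,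
where `q ^ (l*x)` is the real power. -/
noncomputable def qGenocchiPoly (q x : ℝ) (n : ℕ) : ℝ :=
  (n : ℝ) * (1 + q) * (1 / (1 - q)) ^ (n - 1) *
    ∑ l ∈ range n,
      ((n - 1).choose l : ℝ) * (-1) ^ l * q ^ ((l : ℝ) * x) / (1 + q ^ l)

/-- Distribution relation for `q`-Genocchi polynomials: for `0 < q < 1`,
`x ≥ 0`, `m` odd positive and `n ≥ 1`,
`G_{n,q}(x) = ([2]_q/[2]_{q^m}) [m]_q^{n-1} ∑_{a<m} (-1)^a G_{n,q^m}((x+a)/m)`. -/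
theorem qGenocchiPoly_distribution (q x : ℝ) (hq0 : 0 < q) (hq1 : q < 1)
    (hx : 0 ≤ x) (m : ℕ) (hm : Odd m) (hm0 : 0 < m) (n : ℕ) (hn : 1 ≤ n) :
    qGenocchiPoly q x n =
      ((1 + q) / (1 + q ^ m)) * ((1 - q ^ m) / (1 - q)) ^ (n - 1) *
        ∑ a ∈ range m, (-1) ^ a * qGenocchiPoly (q ^ m) ((x + a) / m) n := by
  have h1q : (0:ℝ) < 1 - q := by linarith
  have hqm1 : q ^ m < 1 := pow_lt_one₀ hq0.le hq1 hm0.ne'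
  have h1qm : (0:ℝ) < 1 - q ^ m := by linarith
  have hql : ∀ l : ℕ, (0:ℝ) < 1 + q ^ l := fun l => by positivity
  have hm' : (m:ℝ) ≠ 0 := Nat.cast_ne_zero.mpr hm0.ne'
  -- rewrite the rpow of q^m
  have hpow : ∀ (l a : ℕ), ((q ^ m : ℝ)) ^ ((l:ℝ) * ((x + a) / m)) =
      q ^ ((l:ℝ) * x) * q ^ (l * a) := by
    intro l a
    rw [← Real.rpow_natCast q m, ← Real.rpow_mul hq0.le, ← Real.rpow_natCast q (l * a),
        ← Real.rpow_add hq0]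
    congr 1
    push_cast
    field_simp
  -- geometric sum identity
  have hgeom : ∀ l : ℕ, ∑ a ∈ range m, (-1:ℝ) ^ a * q ^ (l * a) =
      (1 + q ^ (m * l)) / (1 + q ^ l) := by
    intro l
    have h1 : ∀ a : ℕ, (-1:ℝ) ^ a * q ^ (l * a) = (-(q ^ l)) ^ a := by
      intro a; rw [pow_mul, neg_pow]; ring
    have hne : (-(q ^ l) : ℝ) ≠ 1 := by nlinarith [pow_pos hq0 l]
    simp only [h1]
    rw [geom_sum_eq hne, hm.neg_pow]
    rw [div_eq_div_iff (by nlinarith [pow_pos hq0 l]) (hql l).ne']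
    rw [mul_comm m l, pow_mul]
    ring
  unfold qGenocchiPoly
  simp only [hpow, ← pow_mul]
  -- pull out the constants in the inner Genocchi value
  have step1 : ∀ a : ℕ, (-1:ℝ) ^ a *
      ((n:ℝ) * (1 + q ^ m) * (1 / (1 - q ^ m)) ^ (n - 1) *
        ∑ l ∈ range n, ((n - 1).choose l : ℝ) * (-1) ^ l *
          (q ^ ((l:ℝ) * x) * q ^ (l * a)) / (1 + q ^ (m * l))) =
      (n:ℝ) * (1 + q ^ m) * (1 / (1 - q ^ m)) ^ (n - 1) *
        ∑ l ∈ range n, (((n - 1).choose l : ℝ) * (-1) ^ l *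
          q ^ ((l:ℝ) * x) / (1 + q ^ (m * l))) * ((-1) ^ a * q ^ (l * a)) := by
    intro a
    rw [Finset.mul_sum, Finset.mul_sum, Finset.mul_sum]
    apply Finset.sum_congr rfl
    intro l _
    field_simp
  simp only [step1]
  rw [← Finset.mul_sum, Finset.sum_comm]
  have step2 : ∀ l ∈ range n, ∑ a ∈ range m,
      (((n - 1).choose l : ℝ) * (-1) ^ l * q ^ ((l:ℝ) * x) / (1 + q ^ (m * l))) *
        ((-1) ^ a * q ^ (l * a)) =
      ((n - 1).choose l : ℝ) * (-1) ^ l * q ^ ((l:ℝ) * x) / (1 + q ^ l) := by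
    intro l _
    rw [← Finset.mul_sum, hgeom l]
    rw [div_mul_div_comm]
    rw [mul_comm (1 + q ^ (m * l)) (1 + q ^ l)]
    rw [mul_div_mul_right _ _ (by positivity : (1:ℝ) + q ^ (m * l) ≠ 0)]
  rw [Finset.sum_congr rfl step2]
  have hconst : ((1 + q) / (1 + q ^ m)) * ((1 - q ^ m) / (1 - q)) ^ (n - 1) *
      ((n:ℝ) * (1 + q ^ m) * (1 / (1 - q ^ m)) ^ (n - 1)) =
      (n:ℝ) * (1 + q) * (1 / (1 - q)) ^ (n - 1) := by
    rw [div_pow, div_pow, div_pow]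
    field_simp
  rw [← mul_assoc, hconst]
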